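/- The assignment produced by the serial dictatorship algorithm on 2n agents contains at most n² − n 2-person-stable blocking pairs. -/
import Mathlib


/-- A roommate assignment: each agent has a roommate (`mate`) and a room (`room`);
roommates share a room and each room hosts exactly one pair. -/
structure Assignment (A R : Type*) where
  mate : A → A
  room : A → R
  mate_ne_self : ∀ i, mate i ≠ i
  mate_invol : ∀ i, mate (mate i) = i
  room_mate : ∀ i, room (mate i) = room i
  room_eq_iff : ∀ i j, room i = room j ↔ (j = i ∨ j = mate i)

variable {A R : Type*}

/-- Utility of agent `i` in assignment `μ`: happiness for the roommate plus value of the room. -/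
def util (h : A → A → ℝ) (v : A → R → ℝ) (μ : Assignment A R) (i : A) : ℝ :=
  h i (μ.mate i) + v i (μ.room i)

/-- `(i,j)` is a 2-person-stable blocking pair: they live in different rooms and both would
strictly gain by swapping places. -/
def blocking2PS (h : A → A → ℝ) (v : A → R → ℝ) (μ : Assignment A R) (i j : A) : Prop :=
  μ.room i ≠ μ.room j ∧
  h i (μ.mate j) + v i (μ.room j) > h i (μ.mate i) + v i (μ.room i) ∧
  h j (μ.mate i) + v j (μ.room i) > h j (μ.mate j) + v j (μ.room j)

/-- `(i,j)` is a 4-person-stable blocking pair: in addition, both displaced roommates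
strictly prefer their new roommate. -/
def blocking4PS (h : A → A → ℝ) (v : A → R → ℝ) (μ : Assignment A R) (i j : A) : Prop :=
  blocking2PS h v μ i j ∧
  h (μ.mate i) j > h (μ.mate i) i ∧
  h (μ.mate j) i > h (μ.mate j) j

def is2PS (h : A → A → ℝ) (v : A → R → ℝ) (μ : Assignment A R) : Prop :=
  ∀ i j, ¬ blocking2PS h v μ i j

def is4PS (h : A → A → ℝ) (v : A → R → ℝ) (μ : Assignment A R) : Prop :=
  ∀ i j, ¬ blocking4PS h v μ i j

/-- `μ'` Pareto dominates `μ`. -/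
def ParetoDom (h : A → A → ℝ) (v : A → R → ℝ) (μ' μ : Assignment A R) : Prop :=
  (∀ i, util h v μ i ≤ util h v μ' i) ∧ ∃ i, util h v μ i < util h v μ' i

def ParetoOpt (h : A → A → ℝ) (v : A → R → ℝ) (μ : Assignment A R) : Prop :=
  ∀ μ', ¬ ParetoDom h v μ' μ

/-- `μ'` is the result of swapping agents `i` and `j` in `μ`. -/
def IsSwap (μ μ' : Assignment A R) (i j : A) : Prop :=
  μ'.mate i = μ.mate j ∧ μ'.room i = μ.room j ∧
  μ'.mate j = μ.mate i ∧ μ'.room j = μ.room i ∧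
  μ'.room (μ.mate i) = μ.room i ∧ μ'.room (μ.mate j) = μ.room j ∧
  ∀ k, k ≠ i → k ≠ j → k ≠ μ.mate i → k ≠ μ.mate j →
    μ'.mate k = μ.mate k ∧ μ'.room k = μ.room k

/-- Social welfare: the sum of all agents' utilities. -/
noncomputable def SW [Fintype A] (h : A → A → ℝ) (v : A → R → ℝ) (μ : Assignment A R) : ℝ :=
  ∑ i, util h v μ i

/-- The picker (dominant agent) of the triple containing `i`. -/
def pk (σ : A → ℕ) (μ : Assignment A R) (i : A) : A :=
  if σ i < σ (μ.mate i) then i else μ.mate i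

/-- The defining invariant of the output of serial dictatorship with priority order `σ`. -/
def SDInv (σ : A → ℕ) (h : A → A → ℝ) (v : A → R → ℝ) (μ : Assignment A R) : Prop :=
  ∀ i, σ i < σ (μ.mate i) →
    ∀ j, σ i < σ (pk σ μ j) →
      h i (μ.mate i) ≥ h i j ∧ v i (μ.room i) ≥ v i (μ.room j)

section Aux
variable {A R : Type*} (σ : A → ℕ) (μ : Assignment A R)

lemma pk_or (i : A) : pk σ μ i = i ∨ pk σ μ i = μ.mate i := by
  unfold pk; split <;> simp

lemma pk_eq_self_iff (i : A) : pk σ μ i = i ↔ σ i < σ (μ.mate i) := by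
  constructor
  · intro he; by_contra hc
    unfold pk at he; rw [if_neg hc] at he
    exact μ.mate_ne_self i he
  · intro hlt; unfold pk; rw [if_pos hlt]

lemma room_pk (i : A) : μ.room (pk σ μ i) = μ.room i := by
  rcases pk_or σ μ i with hc | hc <;> rw [hc]
  exact μ.room_mate i

lemma pk_mate (hσ : Function.Injective σ) (i : A) : pk σ μ (μ.mate i) = pk σ μ i := by
  have hne : σ (μ.mate i) ≠ σ i := fun he => μ.mate_ne_self i (hσ he)
  unfold pk; rw [μ.mate_invol]
  rcases lt_or_gt_of_ne hne with h1 | h1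
  · rw [if_pos h1, if_neg (lt_asymm h1)]
  · rw [if_neg (lt_asymm h1), if_pos h1]

lemma pk_idem (hσ : Function.Injective σ) (i : A) : pk σ μ (pk σ μ i) = pk σ μ i := by
  rcases pk_or σ μ i with hc | hc
  · rw [hc]; exact hc
  · rw [hc, pk_mate σ μ hσ i]; exact hc

lemma mate_pk_of_ne (i : A) (hne : pk σ μ i ≠ i) : μ.mate (pk σ μ i) = i := by
  rcases pk_or σ μ i with hc | hc
  · exact absurd hc hne
  · rw [hc, μ.mate_invol]

lemma blocking2PS_symm {f : A → A → ℝ} {g : A → R → ℝ} {i j : A}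
    (hb : blocking2PS f g μ i j) : blocking2PS f g μ j i :=
  ⟨fun he => hb.1 he.symm, hb.2.2, hb.2.1⟩

lemma blocking_pk_ne {f : A → A → ℝ} {g : A → R → ℝ} {i j : A}
    (hb : blocking2PS f g μ i j) : pk σ μ i ≠ pk σ μ j := by
  intro he
  exact hb.1 (by rw [← room_pk σ μ i, ← room_pk σ μ j, he])

lemma blocking_nondom (hσ : Function.Injective σ) {f : A → A → ℝ} {g : A → R → ℝ}
    (hsd : SDInv σ f g μ) {x y : A} (hb : blocking2PS f g μ x y)
    (hlt : σ (pk σ μ x) < σ (pk σ μ y)) : pk σ μ x ≠ x := by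
  intro he
  have hx : σ x < σ (μ.mate x) := (pk_eq_self_iff σ μ x).mp he
  have h2 : σ x < σ (pk σ μ (μ.mate y)) := by
    rw [pk_mate σ μ hσ y]; rw [he] at hlt; exact hlt
  obtain ⟨ha, hbv⟩ := hsd x hx (μ.mate y) h2
  rw [μ.room_mate y] at hbv
  have h3 := hb.2.1
  linarith

end Aux

/-- The assignment produced by serial dictatorship on 2n agents contains at most
n² − n (unordered) 2-person-stable blocking pairs. -/
theorem sd_blocking_bound (n : ℕ) (σ : Fin (2*n) → ℕ) (hσ : Function.Injective σ)
    (h : Fin (2*n) → Fin (2*n) → ℝ) (v : Fin (2*n) → Fin n → ℝ)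
    (μ : Assignment (Fin (2*n)) (Fin n)) (hsd : SDInv σ h v μ) :
    {p : Fin (2*n) × Fin (2*n) | p.1 < p.2 ∧ blocking2PS h v μ p.1 p.2}.ncard
      ≤ n ^ 2 - n := by
  classical
  -- the set of pickers
  set Pk : Finset (Fin (2*n)) := Finset.univ.filter (fun i => pk σ μ i = i) with hPk
  -- fibers of the room map
  have hfiber : ∀ i : Fin (2*n),
      (Finset.univ.filter (fun j => μ.room j = μ.room i)) = {i, μ.mate i} := by
    intro i; ext j
    simp only [Finset.mem_filter, Finset.mem_univ, true_and, Finset.mem_insert,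
      Finset.mem_singleton]
    rw [← μ.room_eq_iff i j]
    exact eq_comm
  -- surjectivity of the room map
  have hsurj : ∀ r : Fin n, ∃ i, μ.room i = r := by
    set I : Finset (Fin n) := Finset.univ.image μ.room with hI
    have hcard : (Finset.univ : Finset (Fin (2*n))).card
        = ∑ r ∈ I, (Finset.univ.filter (fun j => μ.room j = r)).card :=
      Finset.card_eq_sum_card_fiberwise (fun x _ => Finset.mem_image_of_mem μ.room (Finset.mem_univ x))
    have hsum : ∀ r ∈ I, (Finset.univ.filter (fun j => μ.room j = r)).card = 2 := by
      intro r hr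
      obtain ⟨i, _, hi⟩ := Finset.mem_image.mp hr
      subst hi
      rw [hfiber i]
      exact Finset.card_pair (Ne.symm (μ.mate_ne_self i))
    rw [Finset.sum_congr rfl hsum, Finset.sum_const, smul_eq_mul] at hcard
    simp only [Finset.card_univ, Fintype.card_fin] at hcard
    have hIcard : I.card = n := by omega
    have hIuniv : I = Finset.univ :=
      Finset.eq_univ_of_card I (by rw [hIcard]; simp)
    intro r
    have hrI : r ∈ I := hIuniv ▸ Finset.mem_univ r
    obtain ⟨i, _, hi⟩ := Finset.mem_image.mp hrI
    exact ⟨i, hi⟩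
  -- there are exactly n pickers
  have hPcard : Pk.card = n := by
    have hb : Pk.card = (Finset.univ : Finset (Fin n)).card := by
      apply Finset.card_bij (fun p _ => μ.room p)
      · intro p hp; exact Finset.mem_univ _
      · intro p hp p' hp' he
        have hm : pk σ μ p = p := (Finset.mem_filter.mp hp).2
        have hm' : pk σ μ p' = p' := (Finset.mem_filter.mp hp').2
        rcases (μ.room_eq_iff p p').mp he with h1 | h1
        · exact h1.symm
        · exfalso
          have e1 : σ p < σ (μ.mate p) := (pk_eq_self_iff σ μ p).mp hm
          have e2 : σ p' < σ (μ.mate p') := (pk_eq_self_iff σ μ p').mp hm'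
          rw [h1, μ.mate_invol] at e2
          exact lt_asymm e1 e2
      · intro r _
        obtain ⟨i, hi⟩ := hsurj r
        refine ⟨pk σ μ i, ?_, ?_⟩
        · exact Finset.mem_filter.mpr ⟨Finset.mem_univ _, pk_idem σ μ hσ i⟩
        · rw [room_pk σ μ i]; exact hi
    rw [hb]; simp
  -- the counting sets
  set F : Finset (Fin (2*n) × Fin (2*n)) := (Pk ×ˢ Pk).filter (fun q => σ q.1 < σ q.2) with hF
  set G : Finset (Fin (2*n) × Fin (2*n)) := (Pk ×ˢ Pk).filter (fun q => σ q.2 < σ q.1) with hG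
  have hFG : F.card = G.card := by
    apply Finset.card_bij (fun q _ => q.swap)
    · intro q hq
      rw [hF, Finset.mem_filter, Finset.mem_product] at hq
      rw [hG, Finset.mem_filter, Finset.mem_product]
      exact ⟨⟨hq.1.2, hq.1.1⟩, hq.2⟩
    · intro q _ q' _ he
      exact Prod.swap_injective he
    · intro q hq
      rw [hG, Finset.mem_filter, Finset.mem_product] at hq
      refine ⟨q.swap, ?_, by simp⟩
      rw [hF, Finset.mem_filter, Finset.mem_product]
      exact ⟨⟨hq.1.2, hq.1.1⟩, hq.2⟩
  have key : 2 * F.card + n = n * n := by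
    have h1 := Finset.card_filter_add_card_filter_not
      (s := Pk ×ˢ Pk) (p := fun q => σ q.1 < σ q.2)
    have h2 := Finset.card_filter_add_card_filter_not
      (s := (Pk ×ˢ Pk).filter (fun q => ¬ σ q.1 < σ q.2)) (p := fun q => σ q.2 < σ q.1)
    have e2 : ((Pk ×ˢ Pk).filter (fun q => ¬ σ q.1 < σ q.2)).filter (fun q => σ q.2 < σ q.1)
        = G := by
      rw [hG]; ext q
      simp only [Finset.mem_filter]
      constructor
      · rintro ⟨⟨hq, -⟩, h4⟩; exact ⟨hq, h4⟩
      · rintro ⟨hq, h4⟩; exact ⟨⟨hq, lt_asymm h4⟩, h4⟩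
    have e3 : ((Pk ×ˢ Pk).filter (fun q => ¬ σ q.1 < σ q.2)).filter (fun q => ¬ σ q.2 < σ q.1)
        = (Pk ×ˢ Pk).filter (fun q => q.1 = q.2) := by
      ext q
      simp only [Finset.mem_filter]
      constructor
      · rintro ⟨⟨hq, h4⟩, h5⟩
        exact ⟨hq, hσ (le_antisymm (not_lt.mp h5) (not_lt.mp h4))⟩
      · rintro ⟨hq, h4⟩
        rw [h4]
        exact ⟨⟨hq, lt_irrefl _⟩, lt_irrefl _⟩
    have e4 : ((Pk ×ˢ Pk).filter (fun q => q.1 = q.2)).card = Pk.card := by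
      apply Finset.card_bij (fun q _ => q.1)
      · intro q hq
        rw [Finset.mem_filter, Finset.mem_product] at hq
        exact hq.1.1
      · intro q hq q' hq' he
        rw [Finset.mem_filter] at hq hq'
        have := hq.2; have := hq'.2
        apply Prod.ext he
        rw [← hq.2, ← hq'.2, he]
      · intro p hp
        refine ⟨(p, p), ?_, rfl⟩
        rw [Finset.mem_filter, Finset.mem_product]
        exact ⟨⟨hp, hp⟩, rfl⟩
    rw [e2, e3, e4] at h2
    rw [← hF] at h1
    have hpp : (Pk ×ˢ Pk).card = n * n := by
      rw [Finset.card_product, hPcard]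
    omega
  -- the injection
  set Φ : (Fin (2*n) × Fin (2*n)) → ((Fin (2*n) × Fin (2*n)) × Bool) := fun p =>
    if σ (pk σ μ p.1) < σ (pk σ μ p.2)
    then ((pk σ μ p.1, pk σ μ p.2), decide (p.2 = pk σ μ p.2))
    else ((pk σ μ p.2, pk σ μ p.1), decide (p.1 = pk σ μ p.1)) with hΦ
  have main : ∀ p : Fin (2*n) × Fin (2*n), blocking2PS h v μ p.1 p.2 →
      ∃ x y : Fin (2*n), (p = (x, y) ∨ p = (y, x)) ∧ σ (pk σ μ x) < σ (pk σ μ y) ∧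
        Φ p = ((pk σ μ x, pk σ μ y), decide (y = pk σ μ y)) ∧ μ.mate (pk σ μ x) = x := by
    intro p hb
    by_cases hc : σ (pk σ μ p.1) < σ (pk σ μ p.2)
    · refine ⟨p.1, p.2, Or.inl (by simp), hc, by simp [hΦ, if_pos hc], ?_⟩
      exact mate_pk_of_ne σ μ p.1 (blocking_nondom σ μ hσ hsd hb hc)
    · have hne : σ (pk σ μ p.1) ≠ σ (pk σ μ p.2) :=
        fun he => blocking_pk_ne σ μ hb (hσ he)
      have hc' : σ (pk σ μ p.2) < σ (pk σ μ p.1) :=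
        lt_of_le_of_ne (not_lt.mp hc) (Ne.symm hne)
      refine ⟨p.2, p.1, Or.inr (by simp), hc', by simp [hΦ, if_neg hc], ?_⟩
      exact mate_pk_of_ne σ μ p.2 (blocking_nondom σ μ hσ hsd (blocking2PS_symm μ hb) hc')
  have hB : ∀ p ∈ {p : Fin (2*n) × Fin (2*n) | p.1 < p.2 ∧ blocking2PS h v μ p.1 p.2},
      Φ p ∈ (↑(F ×ˢ (Finset.univ : Finset Bool)) : Set ((Fin (2*n) × Fin (2*n)) × Bool)) := by
    intro p hp
    obtain ⟨x, y, -, hxy, hΦp, -⟩ := main p hp.2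
    rw [hΦp]
    simp only [Finset.coe_product, Set.mem_prod, Finset.mem_coe, Set.mem_setOf_eq]
    constructor
    · rw [hF, Finset.mem_filter, Finset.mem_product]
      refine ⟨⟨?_, ?_⟩, hxy⟩
      · exact Finset.mem_filter.mpr ⟨Finset.mem_univ _, pk_idem σ μ hσ x⟩
      · exact Finset.mem_filter.mpr ⟨Finset.mem_univ _, pk_idem σ μ hσ y⟩
    · exact Finset.mem_univ _
  have hinj : Set.InjOn Φ {p : Fin (2*n) × Fin (2*n) | p.1 < p.2 ∧ blocking2PS h v μ p.1 p.2} := by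
    intro p hp q hq he
    obtain ⟨x, y, hpxy, -, hΦp, hmx⟩ := main p hp.2
    obtain ⟨x', y', hqxy, -, hΦq, hmx'⟩ := main q hq.2
    rw [hΦp, hΦq] at he
    have e1 : pk σ μ x = pk σ μ x' := congrArg (fun z => z.1.1) he
    have e2 : pk σ μ y = pk σ μ y' := congrArg (fun z => z.1.2) he
    have e3 : (y = pk σ μ y) ↔ (y' = pk σ μ y') :=
      decide_eq_decide.mp (congrArg (fun z => z.2) he)
    have hx : x = x' := by rw [← hmx, ← hmx', e1]
    have hy : y = y' := by
      by_cases hyy : y = pk σ μ y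
      · have hyy' : y' = pk σ μ y' := e3.mp hyy
        rw [hyy, e2, ← hyy']
      · have hyy' : ¬ y' = pk σ μ y' := fun hh => hyy (e3.mpr hh)
        have a1 : μ.mate (pk σ μ y) = y := mate_pk_of_ne σ μ y (fun hh => hyy hh.symm)
        have a2 : μ.mate (pk σ μ y') = y' := mate_pk_of_ne σ μ y' (fun hh => hyy' hh.symm)
        rw [← a1, ← a2, e2]
    have hp1 := hp.1
    have hq1 := hq.1
    rcases hpxy with hp' | hp' <;> rcases hqxy with hq' | hq'
    · rw [hp', hq', hx, hy]
    · exfalso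
      rw [hp'] at hp1; rw [hq'] at hq1
      simp only at hp1 hq1
      rw [hx, hy] at hp1
      exact lt_asymm hp1 hq1
    · exfalso
      rw [hp'] at hp1; rw [hq'] at hq1
      simp only at hp1 hq1
      rw [hx, hy] at hp1
      exact lt_asymm hp1 hq1
    · rw [hp', hq', hx, hy]
  have hle := Set.ncard_le_ncard_of_injOn Φ hB hinj (Finset.finite_toSet _)
  rw [Set.ncard_coe_finset] at hle
  have hprod : (F ×ˢ (Finset.univ : Finset Bool)).card = F.card * 2 := by
    rw [Finset.card_product]; simp
  have hsq : n ^ 2 = n * n := sq n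
  omega
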